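/- arXiv:math/0610075 — 6 statements merged into one kernel-verified Lean document; each statement's English description precedes it below -/
import Mathlib

section
/- Let L > 0 and let μ be a compactly supported probability measure on ℝ with Cauchy transform G. Suppose there exists an open set U ⊆ ℂ containing {z ∈ ℂ : Im z ≠ 0} ∪ {x ∈ ℝ : |x| > L} and a function F holomorphic on U such that F(z) = G(z) whenever Im z ≠ 0. Then the support of μ is contained in the interval [−L, L]. -/
/-!
Let `x` be real with `L < |x|`. The reflection symmetry `G (conj z) = conj (G z)` forces `F x` to be
real, so `-Im F (x + εi) / ε → -Re F'(x)` as `ε → 0⁺`. On the other hand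
`-Im G (x + εi) = ∫ ε / ((x - t)² + ε²) dμ(t) ≥ ε / (δ² + ε²) · μ [x - δ, x + δ]`, and letting
`ε → 0⁺` gives `μ [x - δ, x + δ] ≤ -Re F'(x) · δ²`. Hence the distribution function of `μ` has derivative
zero at every point of the open set `{L < |x|}`, is locally constant there, and `μ` vanishes on it.
-/

open MeasureTheory

/-- The Cauchy transform of a finite measure on ℝ. -/
noncomputable def cauchyTransform (μ : Measure ℝ) (z : ℂ) : ℂ :=
  ∫ t : ℝ, (z - (t : ℂ))⁻¹ ∂μ

open Filter Topology Set Metric Complex ComplexConjugate ProbabilityTheory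

namespace ProbabilityTheory

variable (μ : Measure ℝ) [IsProbabilityMeasure μ]

lemma cdf_sub_cdf_eq_measureReal_Ioc {x y : ℝ} (hxy : x ≤ y) :
    cdf μ y - cdf μ x = μ.real (Ioc x y) := by
  have h := (cdf μ).measure_Ioc x y
  rw [measure_cdf] at h
  rw [measureReal_def, h, ENNReal.toReal_ofReal (sub_nonneg.2 ((cdf μ).mono hxy))]

lemma abs_cdf_sub_cdf_le_measureReal_closedBall (x y : ℝ) :
    |cdf μ y - cdf μ x| ≤ μ.real (closedBall x |y - x|) := by
  rcases le_total x y with hxy | hyx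
  · rw [cdf_sub_cdf_eq_measureReal_Ioc μ hxy, abs_of_nonneg measureReal_nonneg]
    refine measureReal_mono fun t ht => ?_
    rw [Real.closedBall_eq_Icc, abs_of_nonneg (sub_nonneg.2 hxy)]
    exact ⟨by linarith [ht.1], by linarith [ht.2]⟩
  · rw [abs_sub_comm, cdf_sub_cdf_eq_measureReal_Ioc μ hyx, abs_of_nonneg measureReal_nonneg]
    refine measureReal_mono fun t ht => ?_
    rw [Real.closedBall_eq_Icc, abs_of_nonpos (sub_nonpos.2 hyx)]
    exact ⟨by linarith [ht.1], by linarith [ht.2]⟩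

lemma hasDerivAt_cdf_of_measureReal_closedBall_le {x C : ℝ}
    (h : ∀ δ, 0 ≤ δ → μ.real (closedBall x δ) ≤ C * δ ^ 2) : HasDerivAt (cdf μ) 0 x := by
  rw [hasDerivAt_iff_isLittleO]
  simp only [smul_zero, sub_zero]
  refine Asymptotics.IsBigO.trans_isLittleO ?_ (Asymptotics.isLittleO_pow_sub_sub x one_lt_two)
  refine Asymptotics.IsBigO.of_bound C (Eventually.of_forall fun y => ?_)
  rw [Real.norm_eq_abs, norm_pow, norm_norm, Real.norm_eq_abs]
  exact (abs_cdf_sub_cdf_le_measureReal_closedBall μ x y).trans (h _ (abs_nonneg _))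

lemma measure_eq_zero_of_hasDerivAt_cdf {s : Set ℝ} (hs : IsOpen s)
    (h : ∀ x ∈ s, HasDerivAt (cdf μ) 0 x) : μ s = 0 := by
  refine measure_null_of_locally_null s fun x hx => ?_
  obtain ⟨ε, hε, hball⟩ := Metric.isOpen_iff.1 hs x hx
  have hends : cdf μ (x - ε / 2) = cdf μ (x + ε / 2) :=
    isOpen_ball.is_const_of_deriv_eq_zero (convex_ball x ε).isPreconnected
      (fun w hw => (h w (hball hw)).differentiableAt.differentiableWithinAt)
      (fun w hw => (h w (hball hw)).deriv)
      (by simp [abs_of_pos hε, hε]) (by simp [abs_of_pos hε, hε])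
  refine ⟨Ioc (x - ε / 2) (x + ε / 2),
    mem_nhdsWithin_of_mem_nhds (Ioc_mem_nhds (by linarith) (by linarith)), ?_⟩
  rw [← measure_cdf μ, StieltjesFunction.measure_Ioc, hends, sub_self, ENNReal.ofReal_zero]

end ProbabilityTheory

section CauchyTransform

variable (μ : Measure ℝ)

lemma integrable_inv_sub_ofReal [IsFiniteMeasure μ] {z : ℂ} (hz : z.im ≠ 0) :
    Integrable (fun t : ℝ => (z - t)⁻¹) μ := by
  have hne : ∀ t : ℝ, z - t ≠ 0 := fun t h => hz (by simpa using congrArg im h)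
  refine (integrable_const |z.im|⁻¹).mono' ((by fun_prop : Continuous fun t : ℝ => z - t).inv₀
    hne).aestronglyMeasurable (Eventually.of_forall fun t => ?_)
  rw [norm_inv]
  exact inv_anti₀ (abs_pos.2 hz) (by simpa using abs_im_le_norm (z - t))

lemma cauchyTransform_conj (z : ℂ) :
    cauchyTransform μ (conj z) = conj (cauchyTransform μ z) := by
  simp only [cauchyTransform, ← integral_conj, map_inv₀, map_sub, conj_ofReal]

lemma neg_im_cauchyTransform [IsFiniteMeasure μ] (x : ℝ) {ε : ℝ} (hε : ε ≠ 0) :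
    -(cauchyTransform μ (x + ε * I)).im = ∫ t, ε / ((x - t) ^ 2 + ε ^ 2) ∂μ := by
  have hint := integrable_inv_sub_ofReal μ (z := x + ε * I) (by simpa using hε)
  have him : (cauchyTransform μ (x + ε * I)).im = ∫ t : ℝ, ((x + ε * I - t)⁻¹).im ∂μ :=
    (integral_im hint).symm
  rw [him, ← integral_neg]
  congr 1 with t
  rw [inv_im, normSq_apply]
  simp only [sub_re, add_re, ofReal_re, mul_re, I_re, I_im, ofReal_im, sub_im, add_im, mul_im]
  ring

lemma mul_measureReal_closedBall_le_neg_im_cauchyTransform [IsFiniteMeasure μ] (x : ℝ) {δ ε : ℝ}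
    (hε : 0 < ε) :
    ε / (δ ^ 2 + ε ^ 2) * μ.real (closedBall x δ) ≤ -(cauchyTransform μ (x + ε * I)).im := by
  have hint : Integrable (fun t : ℝ => ε / ((x - t) ^ 2 + ε ^ 2)) μ := by
    refine (integrable_const (ε / ε ^ 2)).mono'
      (by fun_prop : Measurable fun t : ℝ => ε / ((x - t) ^ 2 + ε ^ 2)).aestronglyMeasurable
      (Eventually.of_forall fun t => ?_)
    rw [Real.norm_of_nonneg (by positivity)]
    gcongr
    nlinarith [sq_nonneg (x - t)]
  rw [neg_im_cauchyTransform μ x hε.ne']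
  calc ε / (δ ^ 2 + ε ^ 2) * μ.real (closedBall x δ)
      ≤ ∫ t in closedBall x δ, ε / ((x - t) ^ 2 + ε ^ 2) ∂μ := by
        refine setIntegral_ge_of_const_le_real measurableSet_closedBall (measure_ne_top μ _)
          (fun t ht => ?_) hint.integrableOn
        have : (x - t) ^ 2 ≤ δ ^ 2 := by
          rw [mem_closedBall, Real.dist_eq, abs_sub_comm] at ht
          exact sq_le_sq' (abs_le.1 ht).1 (abs_le.1 ht).2
        gcongr
    _ ≤ ∫ t, ε / ((x - t) ^ 2 + ε ^ 2) ∂μ :=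
        setIntegral_le_integral hint (Eventually.of_forall fun t => by positivity)

variable {μ}

lemma im_eq_zero_of_continuousAt {F : ℂ → ℂ}
    (hFG : ∀ z : ℂ, z.im ≠ 0 → F z = cauchyTransform μ z) {x : ℝ} (hF : ContinuousAt F x) :
    (F x).im = 0 := by
  have hpath : ∀ c : ℂ, Tendsto (fun ε : ℝ => (x : ℂ) + ε * c) (𝓝[≠] 0) (𝓝 x) := fun c =>
    tendsto_nhdsWithin_of_tendsto_nhds
      ((continuous_const.add (continuous_ofReal.mul continuous_const)).tendsto' 0 x (by simp))
  have hconj : ∀ ε : ℝ, ε ≠ 0 → conj (F (x + ε * I)) = F (x + ε * -I) := fun ε hε => by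
    rw [hFG _ (by simpa using hε), hFG _ (by simpa using hε), ← cauchyTransform_conj]
    simp
  have hup := (continuous_conj.tendsto _).comp (hF.tendsto.comp (hpath I))
  have hdown := hF.tendsto.comp (hpath (-I))
  refine conj_eq_iff_im.1 (tendsto_nhds_unique (hup.congr' ?_) hdown)
  filter_upwards [self_mem_nhdsWithin] with ε hε using hconj ε hε

lemma tendsto_im_div_of_hasDerivAt {F : ℂ → ℂ} {F' : ℂ} {x : ℝ} (hF : HasDerivAt F F' x)
    (hx : (F x).im = 0) :
    Tendsto (fun ε : ℝ => (F (x + ε * I)).im / ε) (𝓝[≠] 0) (𝓝 F'.re) := by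
  have hpath : HasDerivAt (fun ε : ℝ => (x : ℂ) + ε * I) I 0 := by
    simpa using ((hasDerivAt_id (0 : ℝ)).ofReal_comp.mul_const I).const_add (x : ℂ)
  have hF₀ : HasDerivAt F F' ((fun ε : ℝ => (x : ℂ) + ε * I) 0) := by simpa using hF
  have him := imCLM.hasFDerivAt.comp_hasDerivAt 0 (hF₀.comp 0 hpath)
  rw [imCLM_apply, mul_I_im] at him
  refine (hasDerivAt_iff_tendsto_slope.1 him).congr fun ε => ?_
  simp [slope_def_field, hx]

lemma measureReal_closedBall_le_of_hasDerivAt [IsFiniteMeasure μ] {F : ℂ → ℂ}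
    (hFG : ∀ z : ℂ, z.im ≠ 0 → F z = cauchyTransform μ z) {F' : ℂ} {x : ℝ}
    (hF : HasDerivAt F F' x) (δ : ℝ) :
    μ.real (closedBall x δ) ≤ -F'.re * δ ^ 2 := by
  have hlim : Tendsto (fun ε : ℝ => -((F (x + ε * I)).im / ε) * (δ ^ 2 + ε ^ 2)) (𝓝[>] 0)
      (𝓝 (-F'.re * (δ ^ 2 + 0 ^ 2))) :=
    ((tendsto_im_div_of_hasDerivAt hF (im_eq_zero_of_continuousAt hFG
      hF.continuousAt)).neg.mono_left (nhdsWithin_mono _ fun _ h => ne_of_gt h)).mul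
      (((continuous_const.add (continuous_pow 2)).tendsto 0).mono_left nhdsWithin_le_nhds)
  rw [zero_pow two_ne_zero, add_zero] at hlim
  refine ge_of_tendsto hlim ?_
  filter_upwards [self_mem_nhdsWithin] with ε (hε : 0 < ε)
  have hbound := mul_measureReal_closedBall_le_neg_im_cauchyTransform μ x (δ := δ) hε
  rw [← hFG _ (by simpa using hε.ne')] at hbound
  calc μ.real (closedBall x δ)
      = ε / (δ ^ 2 + ε ^ 2) * μ.real (closedBall x δ) * ((δ ^ 2 + ε ^ 2) / ε) := by
        field_simp
    _ ≤ -(F (x + ε * I)).im * ((δ ^ 2 + ε ^ 2) / ε) := by gcongr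
    _ = -((F (x + ε * I)).im / ε) * (δ ^ 2 + ε ^ 2) := by ring

end CauchyTransform

theorem stmt_0_general (L : ℝ) (μ : Measure ℝ) [IsProbabilityMeasure μ]
    (U : Set ℂ) (hUopen : IsOpen U)
    (hU2 : (fun x : ℝ => (x : ℂ)) '' {x : ℝ | L < |x|} ⊆ U)
    (F : ℂ → ℂ) (hF : DifferentiableOn ℂ F U)
    (hFG : ∀ z : ℂ, z.im ≠ 0 → F z = cauchyTransform μ z) :
    μ (Set.Icc (-L) L)ᶜ = 0 := by
  refine measure_eq_zero_of_hasDerivAt_cdf μ isClosed_Icc.isOpen_compl fun x hx => ?_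
  have hxL : L < |x| := by
    rw [mem_compl_iff, mem_Icc, not_and_or, not_le, not_le] at hx
    rcases hx with hx | hx
    · exact lt_abs.2 (Or.inr (by linarith))
    · exact lt_abs.2 (Or.inl hx)
  have hF' := (hF.differentiableAt (hUopen.mem_nhds (hU2 ⟨x, hxL, rfl⟩))).hasDerivAt
  exact hasDerivAt_cdf_of_measureReal_closedBall_le μ fun δ _ =>
    measureReal_closedBall_le_of_hasDerivAt hFG hF' δ

/-- If the Cauchy transform of a compactly supported probability measure extends
holomorphically across the part of the real line with `|x| > L`, then the measure is
supported in `[-L, L]`. -/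
theorem stmt_0 (L : ℝ) (hL : 0 < L) (μ : Measure ℝ) [IsProbabilityMeasure μ]
    (hcs : ∃ M : ℝ, 0 < M ∧ μ (Set.Icc (-M) M)ᶜ = 0)
    (U : Set ℂ) (hUopen : IsOpen U)
    (hU1 : {z : ℂ | z.im ≠ 0} ⊆ U)
    (hU2 : (fun x : ℝ => (x : ℂ)) '' {x : ℝ | L < |x|} ⊆ U)
    (F : ℂ → ℂ) (hF : DifferentiableOn ℂ F U)
    (hFG : ∀ z : ℂ, z.im ≠ 0 → F z = cauchyTransform μ z) :
    μ (Set.Icc (-L) L)ᶜ = 0 :=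
  stmt_0_general L μ U hUopen hU2 F hF hFG
end

section
/- Let L > 0 and let μ be a probability measure on ℝ supported in [−L, L] with ∫ t dμ(t) = 0. Define g(z) = ∫_ℝ z/(1 − tz) dμ(t) for |z| < 1/L. Then z = 0 is the unique zero of g in the disc {z : |z| < 1/(2L)}. -/
open MeasureTheory

/-- `g(z) = ∫ z/(1 - t z) dμ(t)`, so that `g(z) = G(1/z)` where `G` is the
Cauchy transform of `μ`. -/
noncomputable def gTransform (μ : Measure ℝ) (z : ℂ) : ℂ :=
  ∫ t : ℝ, z / (1 - (t : ℂ) * z) ∂μ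

/-!
For `|t| ≤ L` and `2L|z| ≤ 1` the integrand satisfies `|z/(1 - tz) - z| = |t z² / (1 - tz)| ≤ 2L|z|²`,
so `|g(z) - z| ≤ 2L|z|²` for a probability measure supported in `[-L, L]`. If `g(z) = 0` this
gives `|z| ≤ 2L|z|²`, which forces `z = 0` once `2L|z| < 1`.
-/

lemma half_le_norm_one_sub {w : ℂ} (hw : 2 * ‖w‖ ≤ 1) : 1 / 2 ≤ ‖1 - w‖ := by
  have h := norm_sub_norm_le (1 : ℂ) w
  rw [norm_one] at h
  linarith

lemma norm_div_one_sub_le {w : ℂ} (z : ℂ) (hw : 2 * ‖w‖ ≤ 1) : ‖z / (1 - w)‖ ≤ 2 * ‖z‖ := by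
  have hden := half_le_norm_one_sub hw
  rw [norm_div, div_le_iff₀ (by linarith)]
  nlinarith [norm_nonneg z]

lemma norm_div_one_sub_mul_sub_self_le {t z : ℂ} (h : 2 * ‖t * z‖ ≤ 1) :
    ‖z / (1 - t * z) - z‖ ≤ 2 * ‖t‖ * ‖z‖ ^ 2 := by
  have hne : 1 - t * z ≠ 0 := by
    intro h0
    have hden := half_le_norm_one_sub h
    rw [h0, norm_zero] at hden
    norm_num at hden
  calc ‖z / (1 - t * z) - z‖ = ‖t * z ^ 2 / (1 - t * z)‖ := by
        congr 1
        rw [eq_div_iff hne, sub_mul, div_mul_cancel₀ _ hne]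
        ring
    _ ≤ 2 * ‖t * z ^ 2‖ := norm_div_one_sub_le _ h
    _ = 2 * ‖t‖ * ‖z‖ ^ 2 := by rw [norm_mul, norm_pow, mul_assoc]

section

variable {L : ℝ} {μ : Measure ℝ} {z : ℂ}

lemma two_norm_ofReal_mul_le_one {t : ℝ} (ht : t ∈ Set.Icc (-L) L) (hz : 2 * L * ‖z‖ ≤ 1) :
    2 * ‖(t : ℂ) * z‖ ≤ 1 := by
  have hta : ‖(t : ℂ)‖ ≤ L := by
    rw [Complex.norm_real, Real.norm_eq_abs]
    exact abs_le.2 ht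
  rw [norm_mul]
  nlinarith [norm_nonneg z]

lemma integrable_div_one_sub_ofReal_mul [IsFiniteMeasure μ] (hsupp : μ (Set.Icc (-L) L)ᶜ = 0)
    (hz : 2 * L * ‖z‖ ≤ 1) : Integrable (fun t : ℝ => z / (1 - (t : ℂ) * z)) μ := by
  refine Integrable.of_bound (by fun_prop : Measurable _).aestronglyMeasurable (2 * ‖z‖) ?_
  filter_upwards [mem_ae_iff.mpr hsupp] with t ht
  exact norm_div_one_sub_le z (two_norm_ofReal_mul_le_one ht hz)

lemma norm_gTransform_sub_self_le [IsProbabilityMeasure μ] (hsupp : μ (Set.Icc (-L) L)ᶜ = 0)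
    (hz : 2 * L * ‖z‖ ≤ 1) : ‖gTransform μ z - z‖ ≤ 2 * L * ‖z‖ ^ 2 := by
  have hsub : gTransform μ z - z = ∫ t : ℝ, (z / (1 - (t : ℂ) * z) - z) ∂μ := by
    rw [integral_sub (integrable_div_one_sub_ofReal_mul hsupp hz) (integrable_const z),
      integral_const, probReal_univ, one_smul, gTransform]
  rw [hsub]
  refine (norm_integral_le_of_norm_le_const ?_).trans_eq (by rw [probReal_univ, mul_one])
  filter_upwards [mem_ae_iff.mpr hsupp] with t ht
  refine (norm_div_one_sub_mul_sub_self_le (two_norm_ofReal_mul_le_one ht hz)).trans ?_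
  rw [Complex.norm_real, Real.norm_eq_abs]
  gcongr
  exact abs_le.2 ht

end

theorem stmt_7_general (L : ℝ) (hL : 0 < L) (μ : Measure ℝ) [IsProbabilityMeasure μ]
    (hsupp : μ (Set.Icc (-L) L)ᶜ = 0) :
    ∀ z : ℂ, ‖z‖ < 1 / (2 * L) → (gTransform μ z = 0 ↔ z = 0) := by
  intro z hz
  have hzL : 2 * L * ‖z‖ < 1 := by
    rwa [lt_div_iff₀ (by positivity), mul_comm] at hz
  constructor
  · intro hg
    have h := norm_gTransform_sub_self_le hsupp hzL.le
    rw [hg, zero_sub, norm_neg] at h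
    by_contra hz0
    nlinarith [norm_pos_iff.2 hz0]
  · rintro rfl
    simp [gTransform]

/-- For a centered probability measure supported in `[-L, L]`, `z = 0` is the unique zero
of `g(z) = G(1/z)` in the disc `|z| < 1/(2L)`. -/
theorem stmt_7 (L : ℝ) (hL : 0 < L) (μ : Measure ℝ) [IsProbabilityMeasure μ]
    (hsupp : μ (Set.Icc (-L) L)ᶜ = 0) (hmean : ∫ t : ℝ, t ∂μ = 0) :
    ∀ z : ℂ, ‖z‖ < 1 / (2 * L) → (gTransform μ z = 0 ↔ z = 0) :=
  stmt_7_general L hL μ hsupp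
end

section
/- Let m > 0, v > 0, D ≥ 0 and let K be holomorphic on the punctured disc A = {z ∈ ℂ : 0 < |z| < m}. Assume that |K′(z) + 1/z² − v| ≤ 2D·|z| for all z ∈ A, that m > 4/√v, and set r = 4D/v². Then K′(z) ≠ 0 for every z with 0 < |z| < v^{−1/2} − r. -/
open Metric

/-! At a zero of `K′` the estimate reads `|z|⁻² − v ≤ |z⁻² − v| ≤ 2D|z|`. Writing `t = √v` and
`s = |z| < 1/t − 4D/t⁴`, multiplying by `s²` gives the contradiction
`2Ds³ ≤ 4D/t³ < 1 − ts ≤ 1 − t²s²`. -/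

lemma two_mul_mul_lt_inv_sq_sub_sq {t D s : ℝ} (ht : 0 < t) (hD : 0 ≤ D) (hs : 0 < s)
    (hst : s < t⁻¹ - 4 * D / t ^ 4) : 2 * D * s < (s ^ 2)⁻¹ - t ^ 2 := by
  have hs_lt : s < t⁻¹ := hst.trans_le (sub_le_self _ (by positivity))
  have hts : t * s < 1 := by simpa [ht.ne'] using mul_lt_mul_of_pos_left hs_lt ht
  have hgap : 4 * D / t ^ 3 < 1 - t * s := by
    have h := mul_lt_mul_of_pos_left hst ht
    have ht4 : t * (4 * D / t ^ 4) = 4 * D / t ^ 3 := by field_simp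
    rw [mul_sub, mul_inv_cancel₀ ht.ne', ht4] at h
    linarith
  have hcube : 2 * D * s ^ 3 ≤ 4 * D / t ^ 3 := by
    have : s ^ 3 ≤ (t ^ 3)⁻¹ := by rw [← inv_pow]; gcongr
    calc 2 * D * s ^ 3 ≤ 2 * D * (t ^ 3)⁻¹ := by gcongr
      _ ≤ 4 * D / t ^ 3 := by rw [div_eq_mul_inv]; gcongr; linarith
  have hsq : 1 - t * s ≤ 1 - t ^ 2 * s ^ 2 := by nlinarith [mul_pos ht hs]
  have hnum : 0 < 1 - t ^ 2 * s ^ 2 - 2 * D * s ^ 3 := by linarith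
  have hsplit : (s ^ 2)⁻¹ - t ^ 2 - 2 * D * s = (1 - t ^ 2 * s ^ 2 - 2 * D * s ^ 3) / s ^ 2 := by
    field_simp
  rw [← sub_pos, hsplit]
  exact div_pos hnum (pow_pos hs 2)

theorem stmt_12_general (m v D : ℝ) (hv : 0 < v) (hD : 0 ≤ D)
    (A : Set ℂ) (hA : A = ball (0 : ℂ) m \ {0})
    (K : ℂ → ℂ)
    (hK' : ∀ z ∈ A, ‖deriv K z + (z ^ 2)⁻¹ - (v : ℂ)‖ ≤ 2 * D * ‖z‖)
    (hmv : 4 / Real.sqrt v < m)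
    (r : ℝ) (hr : r = 4 * D / v ^ 2) :
    ∀ z : ℂ, 0 < ‖z‖ → ‖z‖ < (Real.sqrt v)⁻¹ - r →
      deriv K z ≠ 0 := by
  intro z hz hzr hKz
  have ht : 0 < Real.sqrt v := Real.sqrt_pos.2 hv
  have hv_sq : Real.sqrt v ^ 2 = v := Real.sq_sqrt hv.le
  have hz_lt_m : ‖z‖ < m := calc
    ‖z‖ < (Real.sqrt v)⁻¹ := hzr.trans_le (sub_le_self _ (hr ▸ by positivity))
    _ ≤ 4 / Real.sqrt v := by rw [inv_eq_one_div]; gcongr; norm_num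
    _ < m := hmv
  have hzA : z ∈ A := hA ▸ ⟨mem_ball_zero_iff.2 hz_lt_m, norm_pos_iff.1 hz⟩
  have hbound := hK' z hzA
  rw [hKz, zero_add] at hbound
  have hlower : (‖z‖ ^ 2)⁻¹ - v ≤ ‖(z ^ 2)⁻¹ - (v : ℂ)‖ := by
    have h := norm_sub_norm_le (z ^ 2)⁻¹ (v : ℂ)
    rwa [norm_inv, norm_pow, Complex.norm_real, Real.norm_of_nonneg hv.le] at h
  rw [hr, ← hv_sq, ← pow_mul, Real.sqrt_sq ht.le] at hzr
  have hstrict := two_mul_mul_lt_inv_sq_sub_sq ht hD hz hzr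
  rw [hv_sq] at hstrict
  linarith

/-- If `K` is holomorphic on the punctured disc of radius `m`, with
`|K′(z) + 1/z² − v| ≤ 2D|z|` there, `m > 4/√v`, and `r = 4D/v²`, then `K′` has no zeros in
the punctured disc of radius `v^{-1/2} − r`. -/
theorem stmt_12 (m v D : ℝ) (hm : 0 < m) (hv : 0 < v) (hD : 0 ≤ D)
    (A : Set ℂ) (hA : A = ball (0 : ℂ) m \ {0})
    (K : ℂ → ℂ) (hK : DifferentiableOn ℂ K A)
    (hK' : ∀ z ∈ A, ‖deriv K z + (z ^ 2)⁻¹ - (v : ℂ)‖ ≤ 2 * D * ‖z‖)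
    (hmv : 4 / Real.sqrt v < m)
    (r : ℝ) (hr : r = 4 * D / v ^ 2) :
    ∀ z : ℂ, 0 < ‖z‖ → ‖z‖ < (Real.sqrt v)⁻¹ - r →
      deriv K z ≠ 0 :=
  stmt_12_general m v D hv hD A hA K hK' hmv r hr
end

section
/- Let v > 0, D ≥ 0 with 4D/v^{3/2} ≤ 1/2, set r = 4D/v² and x = v^{−1/2} − r (so x > 0). Let K be a function defined at x satisfying |K(x) − 1/x − v·x| ≤ D·x². Then K(x) viewed as a real number satisfies Re K(x) ≤ 2√v + 5D/v; in particular, if K(x) is real then K(x) ≤ 2√v + 5D/v. -/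
/-! Writing `v = s²`, the point is `x = 1/s − 4D/s⁴`. The smallness hypothesis says exactly
`8D ≤ s³`, which gives `x ≥ 1/(2s) > 0`. Then `v x = s − 4D/s²` exactly, while
`1/x ≤ s + 8D/s²` because `(s³ + 8D)(s³ − 4D) − s⁶ = 4D(s³ − 8D) ≥ 0`, and `D x² ≤ D/s²`
since `x ≤ 1/s`. Adding up, `Re K(x) ≤ 1/x + v x + D x² ≤ 2s + 5D/s²`. -/

lemma Complex.re_le_add_norm_sub_ofReal (z : ℂ) (c : ℝ) : z.re ≤ c + ‖z - c‖ := by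
  have := Complex.re_le_norm (z - c)
  rw [Complex.sub_re, Complex.ofReal_re] at this
  linarith

section ProbePoint

variable {s D : ℝ}

lemma eight_mul_le_pow_three_of_div_le (hs : 0 < s) (h : 4 * D / (s ^ 2 * s) ≤ 1 / 2) :
    8 * D ≤ s ^ 3 := by
  rw [div_le_iff₀ (by positivity)] at h
  linarith

lemma inv_two_mul_le_inv_sub (hs : 0 < s) (h : 8 * D ≤ s ^ 3) :
    (2 * s)⁻¹ ≤ s⁻¹ - 4 * D / (s ^ 2) ^ 2 := by
  have key : s⁻¹ - 4 * D / (s ^ 2) ^ 2 - (2 * s)⁻¹ = (s ^ 3 - 8 * D) / (2 * s ^ 4) := by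
    field_simp
    ring
  have : 0 ≤ (s ^ 3 - 8 * D) / (2 * s ^ 4) := div_nonneg (by linarith) (by positivity)
  linarith

lemma inv_inv_sub_le (hs : 0 < s) (hD : 0 ≤ D) (h : 8 * D ≤ s ^ 3) :
    (s⁻¹ - 4 * D / (s ^ 2) ^ 2)⁻¹ ≤ s + 8 * D / s ^ 2 := by
  have hx : 0 < s⁻¹ - 4 * D / (s ^ 2) ^ 2 :=
    lt_of_lt_of_le (by positivity) (inv_two_mul_le_inv_sub hs h)
  rw [inv_le_iff_one_le_mul₀ hx]
  have key : (s + 8 * D / s ^ 2) * (s⁻¹ - 4 * D / (s ^ 2) ^ 2)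
      = 1 + 4 * D * (s ^ 3 - 8 * D) / s ^ 6 := by
    field_simp
    ring
  have : 0 ≤ 4 * D * (s ^ 3 - 8 * D) / s ^ 6 :=
    div_nonneg (mul_nonneg (by positivity) (by linarith)) (by positivity)
  linarith

lemma inv_add_sq_mul_add_mul_sq_le (hs : 0 < s) (hD : 0 ≤ D) (h : 8 * D ≤ s ^ 3) :
    let x := s⁻¹ - 4 * D / (s ^ 2) ^ 2
    x⁻¹ + s ^ 2 * x + D * x ^ 2 ≤ 2 * s + 5 * D / s ^ 2 := by
  intro x
  have hx : 0 ≤ x := le_trans (by positivity) (inv_two_mul_le_inv_sub hs h)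
  have hmul : s ^ 2 * x = s - 4 * D / s ^ 2 := by
    simp only [x]
    field_simp
  have hsq : D * x ^ 2 ≤ D / s ^ 2 := by
    have : x ≤ s⁻¹ := sub_le_self _ (by positivity)
    calc D * x ^ 2 ≤ D * s⁻¹ ^ 2 := by gcongr
      _ = D / s ^ 2 := by field_simp
  have := inv_inv_sub_le hs hD h
  rw [hmul]
  linarith [show 5 * D / s ^ 2 = D / s ^ 2 + 8 * D / s ^ 2 - 4 * D / s ^ 2 by ring]

end ProbePoint

theorem stmt_13_general (v D : ℝ) (hv : 0 < v)
    (hsmall : 4 * D / (v * Real.sqrt v) ≤ 1 / 2)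
    (r : ℝ) (hr : r = 4 * D / v ^ 2)
    (x : ℝ) (hx : x = (Real.sqrt v)⁻¹ - r)
    (Kx : ℂ) (hKx : ‖Kx - ((x : ℂ))⁻¹ - (v : ℂ) * (x : ℂ)‖ ≤ D * x ^ 2) :
    0 < x ∧ Kx.re ≤ 2 * Real.sqrt v + 5 * D / v ∧
      (∀ y : ℝ, Kx = (y : ℂ) → y ≤ 2 * Real.sqrt v + 5 * D / v) := by
  obtain ⟨s, hs, rfl⟩ : ∃ s, 0 < s ∧ v = s ^ 2 :=
    ⟨√v, Real.sqrt_pos.2 hv, (Real.sq_sqrt hv.le).symm⟩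
  rw [Real.sqrt_sq hs.le] at hsmall hx ⊢
  subst hr hx
  have h8D := eight_mul_le_pow_three_of_div_le hs hsmall
  have hxpos := lt_of_lt_of_le (by positivity) (inv_two_mul_le_inv_sub hs h8D)
  have hD : 0 ≤ D := nonneg_of_mul_nonneg_left ((norm_nonneg _).trans hKx) (by positivity)
  have hre : Kx.re ≤ 2 * s + 5 * D / s ^ 2 := by
    have := Complex.re_le_add_norm_sub_ofReal Kx ((s⁻¹ - 4 * D / (s ^ 2) ^ 2)⁻¹ +
      s ^ 2 * (s⁻¹ - 4 * D / (s ^ 2) ^ 2))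
    rw [Complex.ofReal_add, ← sub_sub] at this
    push_cast at this hKx
    linarith [inv_add_sq_mul_add_mul_sq_le hs hD h8D]
  refine ⟨hxpos, hre, fun y hy => ?_⟩
  rwa [hy, Complex.ofReal_re] at hre

/-- With `v > 0`, `D ≥ 0`, `4D/v^{3/2} ≤ 1/2`, `r = 4D/v²` and `x = v^{-1/2} − r` (so
`x > 0`), any complex value `K(x)` with `|K(x) − 1/x − v x| ≤ D x²` has real part at most
`2√v + 5D/v`; in particular, if `K(x)` is real then `K(x) ≤ 2√v + 5D/v`. -/
theorem stmt_13 (v D : ℝ) (hv : 0 < v) (hD : 0 ≤ D)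
    (hsmall : 4 * D / (v * Real.sqrt v) ≤ 1 / 2)
    (r : ℝ) (hr : r = 4 * D / v ^ 2)
    (x : ℝ) (hx : x = (Real.sqrt v)⁻¹ - r)
    (Kx : ℂ) (hKx : ‖Kx - ((x : ℂ))⁻¹ - (v : ℂ) * (x : ℂ)‖ ≤ D * x ^ 2) :
    0 < x ∧ Kx.re ≤ 2 * Real.sqrt v + 5 * D / v ∧
      (∀ y : ℝ, Kx = (y : ℂ) → y ≤ 2 * Real.sqrt v + 5 * D / v) :=
  stmt_13_general v D hv hsmall r hr x hx Kx hKx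
end

section
/- Let m > 0, v > 0, D > 0 with m > 4/√v and D/v^{3/2} ≤ 1/8, and set r = 4D/v². Let K be holomorphic on the punctured disc A = {z ∈ ℂ : 0 < |z| < m}, taking real values at all real points of A, and satisfying |K(z) − 1/z − v·z| ≤ D·|z|² and |K′(z) + 1/z² − v| ≤ 2D·|z| for all z ∈ A. Let I = [−v^{−1/2} + r, 0) ∪ (0, v^{−1/2} − r] ⊆ ℝ. Then K is injective on I, and the image K(I) (a set of real numbers) contains (−∞, −2√v − 5D/v) ∪ (2√v + 5D/v, ∞). -/
/-!
On real points, `f x = Re K x` is within `D x²` of `x⁻¹ + v x` and `f'` is within `2D|x|` of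
`v - x⁻²`. With `c = v^{-1/2} - r`, this forces `f' < 0` on `(0, c]`, so `f` is strictly decreasing
and positive there, tends to `+∞` at `0⁺`, and `f c ≤ 2√v + 5D/v`; the intermediate value theorem
gives every larger value. The hypotheses are invariant under `K ↦ -K(-·)`, which transfers all of
this to `[-c, 0)`, where `f` is negative, so the two halves of `I` have disjoint images.
-/

open Metric Set Filter Topology

section ModelArithmetic

variable {w D c : ℝ} (hw : 0 < w) (hD : 0 < D) (hDw : 8 * D ≤ w ^ 3)
  (hc : c = w⁻¹ - 4 * D / (w ^ 2) ^ 2)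
include hw hD hDw hc

-- In the scale-free variables `t = 4D/w³` and `u = w x` every estimate is a polynomial
-- inequality for `0 < u ≤ 1 - t` and `0 < t ≤ 1/2`.
lemma exists_scale : ∃ t, 0 < t ∧ t ≤ 1 / 2 ∧ D = t * w ^ 3 / 4 ∧ w * c = 1 - t := by
  refine ⟨4 * D / w ^ 3, by positivity, ?_, by field_simp, ?_⟩
  · rw [div_le_iff₀ (by positivity)]; linarith
  · rw [hc]; field_simp

lemma mem_Ioo_zero_inv : c ∈ Ioo 0 w⁻¹ := by
  obtain ⟨t, ht0, ht, -, hwc⟩ := exists_scale hw hD hDw hc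
  rw [mem_Ioo, ← one_div, lt_div_iff₀ hw, mul_comm]
  exact ⟨(pos_iff_pos_of_mul_pos (by linarith : 0 < w * c)).1 hw, by linarith⟩

lemma sq_sub_inv_sq_add_two_mul_neg {x : ℝ} (hx : x ∈ Ioc 0 c) :
    w ^ 2 - (x ^ 2)⁻¹ + 2 * D * x < 0 := by
  obtain ⟨t, ht0, ht, rfl, hwc⟩ := exists_scale hw hD hDw hc
  have hu0 : 0 < w * x := mul_pos hw hx.1
  have hut : w * x ≤ 1 - t := hwc ▸ mul_le_mul_of_nonneg_left hx.2 hw.le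
  have key : (w * x) ^ 2 + t * (w * x) ^ 3 / 2 < 1 := by
    nlinarith [mul_pos ht0 hu0, mul_pos (mul_pos ht0 hu0) hu0, mul_pos ht0 ht0]
  have hx0 : x ≠ 0 := hx.1.ne'
  have : w ^ 2 - (x ^ 2)⁻¹ + 2 * (t * w ^ 3 / 4) * x
      = ((w * x) ^ 2 + t * (w * x) ^ 3 / 2 - 1) / x ^ 2 := by
    field_simp; ring
  rw [this]
  exact div_neg_of_neg_of_pos (by linarith) (by positivity)

lemma inv_add_sq_mul_sub_mul_sq_pos {x : ℝ} (hx : x ∈ Ioc 0 c) :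
    0 < x⁻¹ + w ^ 2 * x - D * x ^ 2 := by
  obtain ⟨t, ht0, ht, rfl, hwc⟩ := exists_scale hw hD hDw hc
  have hu0 : 0 < w * x := mul_pos hw hx.1
  have hu3 : (w * x) ^ 3 ≤ 1 :=
    pow_le_one₀ hu0.le (by linarith [hwc ▸ mul_le_mul_of_nonneg_left hx.2 hw.le])
  have : x⁻¹ + w ^ 2 * x - t * w ^ 3 / 4 * x ^ 2
      = (1 + (w * x) ^ 2 - t * (w * x) ^ 3 / 4) / x := by
    field_simp
  rw [this]
  exact div_pos (by nlinarith [pow_pos hu0 2]) hx.1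

lemma inv_add_sq_mul_add_mul_sq_le_s14 : c⁻¹ + w ^ 2 * c + D * c ^ 2 ≤ 2 * w + 5 * D / w ^ 2 := by
  obtain ⟨t, ht0, ht, rfl, hwc⟩ := exists_scale hw hD hDw hc
  have hc' : c = (1 - t) / w := by rw [← hwc]; field_simp
  have h1t : 0 < 1 - t := by linarith
  have : 2 * w + 5 * (t * w ^ 3 / 4) / w ^ 2 - (c⁻¹ + w ^ 2 * c + t * w ^ 3 / 4 * c ^ 2)
      = w * t * (4 - 6 * t - 3 * t ^ 2 + t ^ 3) / (4 * (1 - t)) := by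
    rw [hc']; field_simp; ring
  rw [← sub_nonneg, this]
  have : 0 ≤ 4 - 6 * t - 3 * t ^ 2 + t ^ 3 := by nlinarith
  positivity

end ModelArithmetic

structure IsNearModel (v D m : ℝ) (K : ℂ → ℂ) : Prop where
  differentiableOn : DifferentiableOn ℂ K (ball 0 m \ {0})
  im_ofReal : ∀ x : ℝ, 0 < |x| → |x| < m → (K x).im = 0
  norm_sub_le : ∀ z ∈ ball 0 m \ {0}, ‖K z - z⁻¹ - (v : ℂ) * z‖ ≤ D * ‖z‖ ^ 2
  norm_deriv_sub_le : ∀ z ∈ ball 0 m \ {0}, ‖deriv K z + (z ^ 2)⁻¹ - (v : ℂ)‖ ≤ 2 * D * ‖z‖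

lemma neg_mem_ball_diff_zero {m : ℝ} {z : ℂ} (hz : z ∈ ball 0 m \ {0}) :
    -z ∈ ball 0 m \ {0} := by
  simpa using hz

lemma ofReal_mem_ball_diff_zero {m x : ℝ} (hx : x ≠ 0) (hxm : |x| < m) :
    (x : ℂ) ∈ ball 0 m \ {0} := by
  simpa [hx] using hxm

lemma abs_lt_of_mem_Ioc {c m x : ℝ} (hcm : c < m) (hx : x ∈ Ioc 0 c) : |x| < m := by
  rw [abs_of_pos hx.1]; exact hx.2.trans_lt hcm

namespace IsNearModel

variable {K : ℂ → ℂ} {v D m : ℝ}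

lemma neg (hK : IsNearModel v D m K) : IsNearModel v D m (fun z ↦ -K (-z)) := by
  refine ⟨(hK.differentiableOn.comp (differentiableOn_neg _) fun z ↦ neg_mem_ball_diff_zero).neg,
    fun x hx hxm ↦ ?_, fun z hz ↦ ?_, fun z hz ↦ ?_⟩
  · simpa using hK.im_ofReal (-x) (by rwa [abs_neg]) (by rwa [abs_neg])
  · have h := hK.norm_sub_le (-z) (neg_mem_ball_diff_zero hz)
    rw [norm_neg] at h
    convert h using 1
    rw [← norm_neg, inv_neg]; ring_nf
  · have h := hK.norm_deriv_sub_le (-z) (neg_mem_ball_diff_zero hz)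
    have hd : deriv (fun z ↦ -K (-z)) z = deriv K (-z) := by
      simp [deriv_comp_neg]
    rw [neg_sq, norm_neg] at h
    rwa [hd]

section RealPoints

variable (hK : IsNearModel v D m K) {x : ℝ} (hx : x ≠ 0) (hxm : |x| < m)
include hK hx hxm

lemma ofReal_re : ((K x).re : ℂ) = K x :=
  Complex.ext rfl (hK.im_ofReal x (abs_pos.2 hx) hxm).symm

lemma hasDerivAt_re : HasDerivAt (fun t : ℝ ↦ (K t).re) (deriv K x).re x :=
  ((hK.differentiableOn.differentiableAt ((isOpen_ball.sdiff isClosed_singleton).mem_nhds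
    (ofReal_mem_ball_diff_zero hx hxm))).hasDerivAt).real_of_complex

lemma abs_re_sub_le : |(K x).re - (x⁻¹ + v * x)| ≤ D * x ^ 2 := by
  have h := hK.norm_sub_le x (ofReal_mem_ball_diff_zero hx hxm)
  rw [Complex.norm_real, Real.norm_eq_abs, sq_abs] at h
  calc |(K x).re - (x⁻¹ + v * x)| = |(K x - (x : ℂ)⁻¹ - v * x).re| := by
        simp [Complex.inv_re, Complex.normSq_ofReal, sub_sub]
    _ ≤ _ := (Complex.abs_re_le_norm _).trans h

lemma deriv_re_le : (deriv K x).re ≤ v - (x ^ 2)⁻¹ + 2 * D * |x| := by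
  have h := hK.norm_deriv_sub_le x (ofReal_mem_ball_diff_zero hx hxm)
  rw [Complex.norm_real, Real.norm_eq_abs] at h
  have hre : (deriv K x + ((x : ℂ) ^ 2)⁻¹ - v).re = (deriv K x).re - (v - (x ^ 2)⁻¹) := by
    rw [← Complex.ofReal_pow, ← Complex.ofReal_inv]
    simp only [Complex.sub_re, Complex.add_re, Complex.ofReal_re]
    ring
  linarith [(Complex.re_le_norm _).trans h]

end RealPoints

section PositiveSide

variable (hK : IsNearModel v D m K) {c : ℝ} (hcm : c < m)
include hK hcm

lemma strictAntiOn_re (hderiv : ∀ x ∈ Ioc 0 c, v - (x ^ 2)⁻¹ + 2 * D * x < 0) :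
    StrictAntiOn (fun x : ℝ ↦ (K x).re) (Ioc 0 c) := by
  have hf : ∀ x ∈ Ioc 0 c, HasDerivAt (fun t : ℝ ↦ (K t).re) (deriv K x).re x := fun x hx ↦
    hK.hasDerivAt_re hx.1.ne' (abs_lt_of_mem_Ioc hcm hx)
  refine strictAntiOn_of_hasDerivWithinAt_neg (f' := fun x ↦ (deriv K x).re) (convex_Ioc 0 c)
    (fun x hx ↦ (hf x hx).continuousAt.continuousWithinAt) (fun x hx ↦ ?_) (fun x hx ↦ ?_)
  all_goals rw [interior_Ioc] at hx
  · exact (hf x (Ioo_subset_Ioc_self hx)).hasDerivWithinAt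
  · have hle := hK.deriv_re_le hx.1.ne' (abs_lt_of_mem_Ioc hcm (Ioo_subset_Ioc_self hx))
    rw [abs_of_pos hx.1] at hle
    exact hle.trans_lt (hderiv x (Ioo_subset_Ioc_self hx))

lemma re_pos (hpos : ∀ x ∈ Ioc 0 c, 0 < x⁻¹ + v * x - D * x ^ 2) {x : ℝ} (hx : x ∈ Ioc 0 c) :
    0 < (K x).re := by
  have h := hK.abs_re_sub_le hx.1.ne' (abs_lt_of_mem_Ioc hcm hx)
  linarith [(abs_le.1 h).1, hpos x hx]

lemma Ici_subset_image_re (hc : 0 < c) :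
    Ici (c⁻¹ + v * c + D * c ^ 2) ⊆ (fun x : ℝ ↦ (K x).re) '' Ioc 0 c := by
  have hlower : ∀ x ∈ Ioc 0 c, x⁻¹ + (v * x - D * x ^ 2) ≤ (K x).re := fun x hx ↦ by
    linarith [(abs_le.1 (hK.abs_re_sub_le hx.1.ne' (abs_lt_of_mem_Ioc hcm hx))).1]
  have hto : Tendsto (fun x : ℝ ↦ (K x).re) (𝓝[>] 0) atTop := by
    refine tendsto_atTop_mono' _ ?_
      (tendsto_inv_nhdsGT_zero.atTop_add (g := fun x ↦ v * x - D * x ^ 2) (C := 0) ?_)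
    · filter_upwards [Ioc_mem_nhdsGT hc] using hlower
    · exact ((by fun_prop : Continuous fun x : ℝ ↦ v * x - D * x ^ 2).tendsto' 0 0
        (by simp)).mono_left nhdsWithin_le_nhds
  have hcont : ContinuousOn (fun x : ℝ ↦ (K x).re) (Ioc 0 c) := fun x hx ↦
    (hK.hasDerivAt_re hx.1.ne' (abs_lt_of_mem_Ioc hcm hx)).continuousAt.continuousWithinAt
  have hend : (K c).re ≤ c⁻¹ + v * c + D * c ^ 2 := by
    linarith [(abs_le.1 (hK.abs_re_sub_le hc.ne' (abs_lt_of_mem_Ioc hcm ⟨hc, le_rfl⟩))).2]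
  exact (Ici_subset_Ici.2 hend).trans (isPreconnected_Ioc.intermediate_value_Ici
    (right_mem_Ioc.2 hc) (le_principal_iff.2 (Ioc_mem_nhdsGT hc)) hcont hto)

end PositiveSide

section BothSides

variable (hK : IsNearModel v D m K) {c : ℝ} (hcm : c < m)
include hK hcm

lemma injOn_ofReal (hderiv : ∀ x ∈ Ioc 0 c, v - (x ^ 2)⁻¹ + 2 * D * x < 0)
    (hpos : ∀ x ∈ Ioc 0 c, 0 < x⁻¹ + v * x - D * x ^ 2) :
    InjOn (fun x : ℝ ↦ K x) (Ico (-c) 0 ∪ Ioc 0 c) := by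
  have hinj {L : ℂ → ℂ} (hL : IsNearModel v D m L) : InjOn (fun x : ℝ ↦ L x) (Ioc 0 c) :=
    fun a ha b hb hab ↦ (hL.strictAntiOn_re hcm hderiv).injOn ha hb (congrArg Complex.re hab)
  have hneg {x : ℝ} (hx : x ∈ Ico (-c) 0) : -x ∈ Ioc 0 c :=
    ⟨by linarith [hx.2], by linarith [hx.1]⟩
  refine (injOn_union (disjoint_left.2 fun x hx hx' ↦ hx.2.not_gt hx'.1)).2
    ⟨fun a ha b hb hab ↦ ?_, hinj hK, fun a ha b hb hab ↦ ?_⟩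
  · simpa using hinj hK.neg (hneg ha) (hneg hb) (by simpa using hab)
  · have hb := hK.re_pos hcm hpos hb
    have ha := hK.neg.re_pos hcm hpos (hneg ha)
    simp only [Complex.ofReal_neg, neg_neg, Complex.neg_re] at ha
    linarith [congrArg Complex.re hab]

lemma exists_ofReal_eq (hc : 0 < c) {y : ℝ} (hy : c⁻¹ + v * c + D * c ^ 2 < |y|) :
    ∃ x ∈ Ico (-c) 0 ∪ Ioc 0 c, K x = y := by
  have hsurj {L : ℂ → ℂ} (hL : IsNearModel v D m L) {y : ℝ} (hy : c⁻¹ + v * c + D * c ^ 2 ≤ y) :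
      ∃ x ∈ Ioc 0 c, L x = y := by
    obtain ⟨x, hx, hxy⟩ := hL.Ici_subset_image_re hcm hc hy
    exact ⟨x, hx, by rw [← hL.ofReal_re hx.1.ne' (abs_lt_of_mem_Ioc hcm hx), ← hxy]⟩
  rcases le_or_gt 0 y with hy0 | hy0
  · obtain ⟨x, hx, hxy⟩ := hsurj hK (hy.le.trans (abs_of_nonneg hy0).le)
    exact ⟨x, Or.inr hx, hxy⟩
  · obtain ⟨x, hx, hxy⟩ := hsurj hK.neg (hy.le.trans (abs_of_neg hy0).le)
    refine ⟨-x, Or.inl ⟨by linarith [hx.2], by linarith [hx.1]⟩, ?_⟩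
    simpa using congrArg Neg.neg hxy

end BothSides

end IsNearModel

lemma setOf_ne_zero_and_abs_le (c : ℝ) :
    {x : ℝ | x ≠ 0 ∧ |x| ≤ c} = Ico (-c) 0 ∪ Ioc 0 c := by
  ext x
  rcases lt_trichotomy x 0 with hx | rfl | hx
  · simp [hx, hx.ne, abs_of_neg hx, neg_le, not_lt.2 hx.le]
  · simp
  · simp [hx, hx.ne', abs_of_pos hx, not_lt.2 hx.le]

theorem stmt_14_general (m v D : ℝ) (hv : 0 < v) (hD : 0 < D)
    (hmv : 4 / Real.sqrt v < m) (hDv : D / (v * Real.sqrt v) ≤ 1 / 8)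
    (r : ℝ) (hr : r = 4 * D / v ^ 2)
    (A : Set ℂ) (hA : A = ball (0 : ℂ) m \ {0})
    (K : ℂ → ℂ) (hK : DifferentiableOn ℂ K A)
    (hreal : ∀ x : ℝ, 0 < |x| → |x| < m → (K (x : ℂ)).im = 0)
    (hK1 : ∀ z ∈ A, ‖K z - z⁻¹ - (v : ℂ) * z‖ ≤ D * ‖z‖ ^ 2)
    (hK2 : ∀ z ∈ A, ‖deriv K z + (z ^ 2)⁻¹ - (v : ℂ)‖ ≤ 2 * D * ‖z‖)
    (I : Set ℝ) (hI : I = {x : ℝ | x ≠ 0 ∧ |x| ≤ (Real.sqrt v)⁻¹ - r}) :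
    Set.InjOn (fun x : ℝ => K (x : ℂ)) I ∧
    ∀ y : ℝ, 2 * Real.sqrt v + 5 * D / v < |y| → ∃ x ∈ I, K (x : ℂ) = (y : ℂ) := by
  obtain ⟨w, hw, rfl⟩ : ∃ w, 0 < w ∧ w ^ 2 = v := ⟨√v, Real.sqrt_pos.2 hv, Real.sq_sqrt hv.le⟩
  rw [Real.sqrt_sq hw.le] at hmv hDv hI ⊢
  subst hr hA hI
  have hModel : IsNearModel (w ^ 2) D m K := ⟨hK, hreal, hK1, hK2⟩
  set c := w⁻¹ - 4 * D / (w ^ 2) ^ 2 with hc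
  have hDw : 8 * D ≤ w ^ 3 := by
    rw [div_le_iff₀ (by positivity)] at hDv; linarith
  obtain ⟨hc0, hcw⟩ := mem_Ioo_zero_inv hw hD hDw hc
  have hcm : c < m := calc
    c < w⁻¹ := hcw
    _ < 4 / w := by rw [inv_eq_one_div]; gcongr; norm_num
    _ < m := hmv
  rw [setOf_ne_zero_and_abs_le]
  refine ⟨hModel.injOn_ofReal hcm (fun x hx ↦ sq_sub_inv_sq_add_two_mul_neg hw hD hDw hc hx)
    (fun x hx ↦ inv_add_sq_mul_sub_mul_sq_pos hw hD hDw hc hx),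
    fun y hy ↦ hModel.exists_ofReal_eq hcm hc0
      ((inv_add_sq_mul_add_mul_sq_le_s14 hw hD hDw hc).trans_lt hy)⟩

/-- Under the stated hypotheses, `K` maps `I = [−v^{-1/2}+r, 0) ∪ (0, v^{-1/2}−r]`
injectively onto a set of reals containing
`(−∞, −2√v − 5D/v) ∪ (2√v + 5D/v, ∞)`. -/
theorem stmt_14 (m v D : ℝ) (hm : 0 < m) (hv : 0 < v) (hD : 0 < D)
    (hmv : 4 / Real.sqrt v < m) (hDv : D / (v * Real.sqrt v) ≤ 1 / 8)
    (r : ℝ) (hr : r = 4 * D / v ^ 2)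
    (A : Set ℂ) (hA : A = ball (0 : ℂ) m \ {0})
    (K : ℂ → ℂ) (hK : DifferentiableOn ℂ K A)
    (hreal : ∀ x : ℝ, 0 < |x| → |x| < m → (K (x : ℂ)).im = 0)
    (hK1 : ∀ z ∈ A, ‖K z - z⁻¹ - (v : ℂ) * z‖ ≤ D * ‖z‖ ^ 2)
    (hK2 : ∀ z ∈ A, ‖deriv K z + (z ^ 2)⁻¹ - (v : ℂ)‖ ≤ 2 * D * ‖z‖)
    (I : Set ℝ) (hI : I = {x : ℝ | x ≠ 0 ∧ |x| ≤ (Real.sqrt v)⁻¹ - r}) :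
    Set.InjOn (fun x : ℝ => K (x : ℂ)) I ∧
    ∀ y : ℝ, 2 * Real.sqrt v + 5 * D / v < |y| → ∃ x ∈ I, K (x : ℂ) = (y : ℂ) :=
  stmt_14_general m v D hv hD hmv hDv r hr A hA K hK hreal hK1 hK2 I hI
end

section
/- Let m > 0, v > 0, D > 0 with m > 4/√v and D/v^{3/2} ≤ 1/8, and set r = 4D/v². Let K be holomorphic on the punctured disc A = {z ∈ ℂ : 0 < |z| < m}, taking real values at all real points of A, and satisfying |K(z) − 1/z − v·z| ≤ D·|z|² and |K′(z) + 1/z² − v| ≤ 2D·|z| for all z ∈ A. Then there exist R₀ > 0, an open set S ⊆ ℂ containing both {x ∈ ℝ : |x| > 2√v + 5D/v} and {z ∈ ℂ : |z| > R₀}, and a function G holomorphic on S such that for every w ∈ S one has G(w) ∈ A and K(G(w)) = w. -/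
/-!
Write `K z = z⁻¹ + v z + e z`. Since `‖e z‖ ≤ D ‖z‖²`, the remainder `e` extends across `0` with
`e' 0 = 0`, so `‖e'‖ ≤ 2 D ρ` on the whole disc of radius `ρ` and `e` is `2 D ρ`-Lipschitz there.
If `K z₁ = K z₂` then `e z₁ - e z₂ = (z₁ - z₂) ((z₁ z₂)⁻¹ - v)`, and for `ρ` small the second
factor exceeds `2 D ρ` in norm; hence `K` is injective with nonvanishing derivative on the
punctured disc `Ω` of radius `ρ`, `S = K '' Ω` is open and the inverse of `K` is holomorphic on it.
`S` contains the large real numbers by the intermediate value theorem on `(0, ρ]` (and on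
`[-ρ, 0)` by symmetry), and a neighbourhood of `∞` because `1 / K` extends holomorphically to `0`
with derivative `1` there, so it maps a neighbourhood of `0` onto one.
-/

open Metric Set Filter Function
open scoped Topology

theorem exists_radius {m v D : ℝ} (hv : 0 < v) (hD : 0 < D) (hmv : 4 / √v < m)
    (hDv : D / (v * √v) ≤ 1 / 8) :
    ∃ ρ, 0 < ρ ∧ ρ < m ∧ 2 * D * ρ < (ρ ^ 2)⁻¹ - v ∧
      ρ⁻¹ + v * ρ + D * ρ ^ 2 < 2 * √v + 5 * D / v := by
  obtain ⟨w, hw, rfl⟩ : ∃ w, 0 < w ∧ v = w ^ 2 :=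
    ⟨√v, Real.sqrt_pos.2 hv, (Real.sq_sqrt hv.le).symm⟩
  rw [Real.sqrt_sq hw.le] at hmv hDv ⊢
  -- the radius is `ρ = a / √v` with `a = 1 - 3 D / v ^ (3 / 2) ∈ [5/8, 1)`
  obtain ⟨a, rfl⟩ : ∃ a, D = (1 - a) / 3 * w ^ 3 := ⟨1 - 3 * D / w ^ 3, by field_simp; ring⟩
  rw [show (1 - a) / 3 * w ^ 3 / (w ^ 2 * w) = (1 - a) / 3 by field_simp] at hDv
  have ha1 : a < 1 := by nlinarith [pow_pos hw 3]
  have ha : 5 / 8 ≤ a := by linarith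
  refine ⟨a / w, by positivity, ?_, ?_, ?_⟩
  · calc a / w < 4 / w := by gcongr; linarith
      _ < m := hmv
  · rw [div_pow, inv_div, lt_sub_iff_add_lt, lt_div_iff₀ (by positivity)]
    field_simp
    nlinarith [mul_pos (sub_pos.2 ha1) (sub_pos.2 ha1)]
  · rw [inv_div, ← sub_pos]
    have key : 0 < (2 + 5 * ((1 - a) / 3)) * a - 1 - a ^ 2 - (1 - a) / 3 * a ^ 3 := by
      nlinarith [mul_pos (sub_pos.2 ha1) (sub_pos.2 ha1)]
    exact (div_pos (mul_pos hw key) (by linarith)).trans_eq (by field_simp; ring)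

theorem inv_sub_norm_le_norm_inv_sub {w v : ℂ} {r : ℝ} (hw : w ≠ 0) (hwr : ‖w‖ ≤ r) :
    r⁻¹ - ‖v‖ ≤ ‖w⁻¹ - v‖ :=
  calc r⁻¹ - ‖v‖ ≤ ‖w⁻¹‖ - ‖v‖ := by rw [norm_inv]; gcongr
    _ ≤ ‖w⁻¹ - v‖ := norm_sub_norm_le _ _

noncomputable def laurentRemainder (K : ℂ → ℂ) (v : ℂ) : ℂ → ℂ :=
  update (fun z => K z - z⁻¹ - v * z) 0 0

section LaurentRemainder

variable {K : ℂ → ℂ} {v : ℂ} {D ρ : ℝ}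

theorem laurentRemainder_of_ne {z : ℂ} (hz : z ≠ 0) :
    laurentRemainder K v z = K z - z⁻¹ - v * z :=
  update_of_ne hz _ _

theorem norm_laurentRemainder_le
    (hK1 : ∀ z ∈ ball (0 : ℂ) ρ \ {0}, ‖K z - z⁻¹ - v * z‖ ≤ D * ‖z‖ ^ 2)
    {z : ℂ} (hz : z ∈ ball (0 : ℂ) ρ) : ‖laurentRemainder K v z‖ ≤ D * ‖z‖ ^ 2 := by
  rcases eq_or_ne z 0 with rfl | hz0
  · simp [laurentRemainder]
  · rw [laurentRemainder_of_ne hz0]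
    exact hK1 z ⟨hz, hz0⟩

theorem hasDerivAt_laurentRemainder_zero (hρ : 0 < ρ)
    (hK1 : ∀ z ∈ ball (0 : ℂ) ρ \ {0}, ‖K z - z⁻¹ - v * z‖ ≤ D * ‖z‖ ^ 2) :
    HasDerivAt (laurentRemainder K v) 0 0 := by
  rw [hasDerivAt_iff_isLittleO_nhds_zero]
  have hbig : laurentRemainder K v =O[𝓝 0] fun h => h ^ 2 :=
    Asymptotics.IsBigO.of_bound D <| eventually_of_mem (ball_mem_nhds 0 hρ) fun z hz => by
      simpa using norm_laurentRemainder_le hK1 hz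
  simpa [laurentRemainder] using hbig.trans_isLittleO (Asymptotics.isLittleO_pow_id one_lt_two)

theorem hasDerivAt_laurentRemainder {z : ℂ} (hz : z ≠ 0) (hK : DifferentiableAt ℂ K z) :
    HasDerivAt (laurentRemainder K v) (deriv K z + (z ^ 2)⁻¹ - v) z := by
  have h := (hK.hasDerivAt.sub (hasDerivAt_inv hz)).sub ((hasDerivAt_id z).const_mul v)
  rw [show deriv K z - -(z ^ 2)⁻¹ - v * 1 = deriv K z + (z ^ 2)⁻¹ - v by ring] at h
  refine h.congr_of_eventuallyEq ?_
  filter_upwards [isOpen_ne.mem_nhds hz] with y hy using laurentRemainder_of_ne hy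

theorem norm_laurentRemainder_sub_le (hρ : 0 < ρ) (hD : 0 ≤ D)
    (hKd : DifferentiableOn ℂ K (ball (0 : ℂ) ρ \ {0}))
    (hK1 : ∀ z ∈ ball (0 : ℂ) ρ \ {0}, ‖K z - z⁻¹ - v * z‖ ≤ D * ‖z‖ ^ 2)
    (hK2 : ∀ z ∈ ball (0 : ℂ) ρ \ {0}, ‖deriv K z + (z ^ 2)⁻¹ - v‖ ≤ 2 * D * ‖z‖)
    {z₁ z₂ : ℂ} (hz₁ : z₁ ∈ ball (0 : ℂ) ρ) (hz₂ : z₂ ∈ ball (0 : ℂ) ρ) :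
    ‖laurentRemainder K v z₁ - laurentRemainder K v z₂‖ ≤ 2 * D * ρ * ‖z₁ - z₂‖ := by
  let R' : ℂ → ℂ := update (fun z => deriv K z + (z ^ 2)⁻¹ - v) 0 0
  have hderiv : ∀ z ∈ ball (0 : ℂ) ρ, HasDerivAt (laurentRemainder K v) (R' z) z := by
    intro z hz
    rcases eq_or_ne z 0 with rfl | hz0
    · simpa [R'] using hasDerivAt_laurentRemainder_zero hρ hK1
    · simpa [R', hz0] using hasDerivAt_laurentRemainder hz0
        (hKd.differentiableAt ((isOpen_ball.sdiff isClosed_singleton).mem_nhds ⟨hz, hz0⟩))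
  have hbound : ∀ z ∈ ball (0 : ℂ) ρ, ‖R' z‖ ≤ 2 * D * ρ := by
    intro z hz
    rcases eq_or_ne z 0 with rfl | hz0
    · simp only [R', update_self, norm_zero]
      positivity
    · simp only [R', update_of_ne hz0]
      have := mem_ball_zero_iff.1 hz
      exact (hK2 z ⟨hz, hz0⟩).trans (by gcongr)
  exact (convex_ball 0 ρ).norm_image_sub_le_of_norm_hasDerivWithin_le
    (fun z hz => (hderiv z hz).hasDerivWithinAt) hbound hz₂ hz₁

theorem injOn_of_norm_laurentRemainder_le (hρ : 0 < ρ) (hD : 0 ≤ D)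
    (hKd : DifferentiableOn ℂ K (ball (0 : ℂ) ρ \ {0}))
    (hK1 : ∀ z ∈ ball (0 : ℂ) ρ \ {0}, ‖K z - z⁻¹ - v * z‖ ≤ D * ‖z‖ ^ 2)
    (hK2 : ∀ z ∈ ball (0 : ℂ) ρ \ {0}, ‖deriv K z + (z ^ 2)⁻¹ - v‖ ≤ 2 * D * ‖z‖)
    (hsmall : 2 * D * ρ < (ρ ^ 2)⁻¹ - ‖v‖) : InjOn K (ball (0 : ℂ) ρ \ {0}) := by
  intro z₁ hz₁ z₂ hz₂ hK
  have h₁ : z₁ ≠ 0 := hz₁.2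
  have h₂ : z₂ ≠ 0 := hz₂.2
  have hdiff : laurentRemainder K v z₁ - laurentRemainder K v z₂
      = (z₁ - z₂) * ((z₁ * z₂)⁻¹ - v) := by
    rw [laurentRemainder_of_ne h₁, laurentRemainder_of_ne h₂, hK]
    field_simp
    ring
  have hlow := inv_sub_norm_le_norm_inv_sub (v := v) (mul_ne_zero h₁ h₂)
    (show ‖z₁ * z₂‖ ≤ ρ ^ 2 by
      rw [norm_mul, sq]
      exact mul_le_mul (mem_ball_zero_iff.1 hz₁.1).le (mem_ball_zero_iff.1 hz₂.1).le
        (norm_nonneg _) hρ.le)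
  have hup := norm_laurentRemainder_sub_le hρ hD hKd hK1 hK2 hz₁.1 hz₂.1
  rw [hdiff, norm_mul] at hup
  have : ‖z₁ - z₂‖ * ((ρ ^ 2)⁻¹ - ‖v‖) ≤ ‖z₁ - z₂‖ * (2 * D * ρ) :=
    calc _ ≤ ‖z₁ - z₂‖ * ‖(z₁ * z₂)⁻¹ - v‖ := by gcongr
      _ ≤ _ := by linarith
  have : ‖z₁ - z₂‖ = 0 := by nlinarith [norm_nonneg (z₁ - z₂)]
  exact sub_eq_zero.1 (norm_eq_zero.1 this)

theorem deriv_ne_zero_of_norm_deriv_add_inv_sq_sub_le (hD : 0 ≤ D)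
    (hK2 : ∀ z ∈ ball (0 : ℂ) ρ \ {0}, ‖deriv K z + (z ^ 2)⁻¹ - v‖ ≤ 2 * D * ‖z‖)
    (hsmall : 2 * D * ρ < (ρ ^ 2)⁻¹ - ‖v‖) {z : ℂ} (hz : z ∈ ball (0 : ℂ) ρ \ {0}) :
    deriv K z ≠ 0 := by
  intro h0
  have hzρ : ‖z‖ < ρ := mem_ball_zero_iff.1 hz.1
  have hlow := inv_sub_norm_le_norm_inv_sub (v := v) (pow_ne_zero 2 hz.2)
    (show ‖z ^ 2‖ ≤ ρ ^ 2 by rw [norm_pow]; gcongr)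
  have hup := hK2 z hz
  rw [h0, zero_add] at hup
  have : 2 * D * ‖z‖ ≤ 2 * D * ρ := by gcongr
  linarith

theorem tendsto_mul_self_nhdsNE_zero (hR : ContinuousAt (laurentRemainder K v) 0) :
    Tendsto (fun z => z * K z) (𝓝[≠] 0) (𝓝 1) := by
  have hcont : ContinuousAt (fun z => 1 + z * laurentRemainder K v z + v * z ^ 2) 0 := by
    fun_prop
  have hlim := hcont.tendsto
  simp only [zero_mul, add_zero, ne_eq, OfNat.ofNat_ne_zero, not_false_eq_true, zero_pow,
    mul_zero] at hlim
  refine (tendsto_nhdsWithin_of_tendsto_nhds hlim).congr' ?_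
  filter_upwards [self_mem_nhdsWithin] with z (hz : z ≠ 0)
  rw [laurentRemainder_of_ne hz]
  field_simp
  ring

end LaurentRemainder

theorem isOpen_image_and_differentiableOn_invFunOn {𝕜 : Type*} [NontriviallyNormedField 𝕜]
    [CompleteSpace 𝕜] {f f' : 𝕜 → 𝕜} {U : Set 𝕜} (hU : IsOpen U)
    (hf : ∀ z ∈ U, HasStrictDerivAt f (f' z) z) (hf' : ∀ z ∈ U, f' z ≠ 0) (hinj : InjOn f U) :
    IsOpen (f '' U) ∧ DifferentiableOn 𝕜 (invFunOn f U) (f '' U) := by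
  have himage : ∀ z ∈ U, ∀ V ∈ 𝓝 z, f '' V ∈ 𝓝 (f z) := fun z hz V hV =>
    (hf z hz).map_nhds_eq (hf' z hz) ▸ image_mem_map hV
  have hopen : IsOpen (f '' U) := isOpen_iff_mem_nhds.2 <| by
    rintro _ ⟨z, hz, rfl⟩
    exact himage z hz U (hU.mem_nhds hz)
  refine ⟨hopen, ?_⟩
  rintro _ ⟨z, hz, rfl⟩
  have hGz : invFunOn f U (f z) = z := hinj.leftInvOn_invFunOn hz
  have hcont : ContinuousAt (invFunOn f U) (f z) := by
    rw [ContinuousAt, hGz]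
    intro V hV
    rw [mem_map]
    filter_upwards [himage z hz _ (inter_mem hV (hU.mem_nhds hz))]
    rintro _ ⟨y, hy, rfl⟩
    rw [mem_preimage, hinj.leftInvOn_invFunOn hy.2]
    exact hy.1
  have hright : ∀ᶠ w in 𝓝 (f z), f (invFunOn f U w) = w := by
    filter_upwards [hopen.mem_nhds (mem_image_of_mem f hz)] with w hw using invFunOn_eq hw
  exact (HasDerivAt.of_local_left_inverse hcont (by rw [hGz]; exact (hf z hz).hasDerivAt)
    (hf' z hz) hright).differentiableAt.differentiableWithinAt

theorem exists_mem_Ioo_eq_of_tendsto_atTop {f : ℝ → ℝ} {a b x : ℝ} (hab : a < b)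
    (hf : ContinuousOn f (Ioc a b)) (hlim : Tendsto f (𝓝[>] a) atTop) (hx : f b < x) :
    ∃ s ∈ Ioo a b, f s = x := by
  have : NeBot (𝓝[Ioc a b] a) := mem_closure_iff_nhdsWithin_neBot.1 <| by
    rw [closure_Ioc hab.ne]; exact left_mem_Icc.2 hab.le
  obtain ⟨s, hs, rfl⟩ := isPreconnected_Ioc.intermediate_value_Ici (l := 𝓝[Ioc a b] a)
    (right_mem_Ioc.2 hab) inf_le_right hf
    (hlim.mono_left (nhdsWithin_mono _ Ioc_subset_Ioi_self)) hx.le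
  exact ⟨s, ⟨hs.1, hs.2.lt_of_ne (by rintro rfl; exact lt_irrefl _ hx)⟩, rfl⟩

section RealPoints

variable {K : ℂ → ℂ} {m v D ρ : ℝ}

theorem exists_pos_real_preimage (hρ : 0 < ρ) (hρm : ρ < m) (hv : 0 ≤ v) (hD : 0 ≤ D)
    (hKc : ContinuousOn K (ball 0 m \ {0}))
    (hreal : ∀ s : ℝ, 0 < |s| → |s| < m → (K s).im = 0)
    (hK1 : ∀ z ∈ ball (0 : ℂ) m \ {0}, ‖K z - z⁻¹ - v * z‖ ≤ D * ‖z‖ ^ 2)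
    {x : ℝ} (hx : ρ⁻¹ + v * ρ + D * ρ ^ 2 < x) : ∃ z ∈ ball (0 : ℂ) ρ \ {0}, K z = x := by
  have hmem : ∀ s ∈ Ioc 0 ρ, (s : ℂ) ∈ ball (0 : ℂ) m \ {0} := fun s hs =>
    ⟨by simpa [abs_of_pos hs.1] using hs.2.trans_lt hρm, by simpa using hs.1.ne'⟩
  have hre : ∀ s ∈ Ioc 0 ρ, |(K s).re - s⁻¹ - v * s| ≤ D * s ^ 2 := fun s hs => by
    simpa [sq_abs] using (Complex.abs_re_le_norm _).trans (hK1 s (hmem s hs))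
  have hlim : Tendsto (fun s : ℝ => (K s).re) (𝓝[>] 0) atTop := by
    refine tendsto_atTop_mono' _ ?_ (tendsto_atTop_add_const_right _ (-(D * ρ ^ 2))
      tendsto_inv_nhdsGT_zero)
    filter_upwards [Ioo_mem_nhdsGT hρ] with s hs
    have := (abs_le.1 (hre s (Ioo_subset_Ioc_self hs))).1
    have : D * s ^ 2 ≤ D * ρ ^ 2 := by gcongr; exacts [hs.1.le, hs.2.le]
    nlinarith [mul_nonneg hv hs.1.le]
  obtain ⟨s, hs, hsx⟩ := exists_mem_Ioo_eq_of_tendsto_atTop hρ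
    (Complex.continuous_re.comp_continuousOn
      (hKc.comp Complex.continuous_ofReal.continuousOn hmem))
    hlim (show (K ρ).re < x by linarith [(abs_le.1 (hre ρ (right_mem_Ioc.2 hρ))).2])
  refine ⟨s, ⟨by simpa [abs_of_pos hs.1] using hs.2, by simpa using hs.1.ne'⟩, ?_⟩
  exact Complex.ext (by simpa using hsx) (hreal s (abs_pos.2 hs.1.ne')
    (by rw [abs_of_pos hs.1]; linarith [hs.2]))

theorem exists_real_preimage (hρ : 0 < ρ) (hρm : ρ < m) (hv : 0 ≤ v) (hD : 0 ≤ D)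
    (hKc : ContinuousOn K (ball 0 m \ {0}))
    (hreal : ∀ s : ℝ, 0 < |s| → |s| < m → (K s).im = 0)
    (hK1 : ∀ z ∈ ball (0 : ℂ) m \ {0}, ‖K z - z⁻¹ - v * z‖ ≤ D * ‖z‖ ^ 2)
    {x : ℝ} (hx : ρ⁻¹ + v * ρ + D * ρ ^ 2 < |x|) : ∃ z ∈ ball (0 : ℂ) ρ \ {0}, K z = x := by
  rcases le_or_gt 0 x with hx0 | hx0
  · exact exists_pos_real_preimage hρ hρm hv hD hKc hreal hK1 (hx.trans_eq (abs_of_nonneg hx0))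
  -- `z ↦ -K (-z)` satisfies the same hypotheses and takes the value `-x > 0`
  have hneg : ∀ r : ℝ, MapsTo (fun z : ℂ => -z) (ball 0 r \ {0}) (ball 0 r \ {0}) :=
    fun r z hz => by simpa using hz
  obtain ⟨z, hz, hKz⟩ := exists_pos_real_preimage (K := fun z => -K (-z)) hρ hρm hv hD
    ((hKc.comp continuousOn_neg (hneg m)).neg)
    (fun s hs hsm => by simpa using hreal (-s) (by rwa [abs_neg]) (by rwa [abs_neg]))
    (fun z hz => by
      convert hK1 (-z) (hneg m hz) using 1
      · rw [← norm_neg]; congr 1; rw [inv_neg]; ring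
      · rw [norm_neg])
    (hx.trans_eq (abs_of_neg hx0))
  exact ⟨-z, hneg ρ hz, by simpa [neg_eq_iff_eq_neg] using hKz⟩

end RealPoints

theorem exists_preimage_of_tendsto_mul_self {K : ℂ → ℂ} {U : Set ℂ} (hU : U ∈ 𝓝[≠] 0)
    (hK : DifferentiableOn ℂ K U) (hlim : Tendsto (fun z => z * K z) (𝓝[≠] 0) (𝓝 1)) :
    ∃ R₀ : ℝ, 0 < R₀ ∧ ∀ w : ℂ, R₀ < ‖w‖ → ∃ z ∈ U, K z = w := by
  obtain ⟨δ, hδ, hδU⟩ := mem_nhdsWithin_iff.1 (inter_mem hU (hlim.eventually_ne one_ne_zero))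
  let F : ℂ → ℂ := update (fun z => (K z)⁻¹) 0 0
  have hF0 : F 0 = 0 := update_self _ _ _
  have hFne : ∀ z, z ≠ 0 → F z = (K z)⁻¹ := fun z hz => update_of_ne hz _ _
  have hFderiv : HasDerivAt F 1 0 := by
    rw [hasDerivAt_iff_tendsto_slope]
    refine (by simpa using hlim.inv₀ one_ne_zero : Tendsto (fun z => (z * K z)⁻¹) _ _).congr' ?_
    filter_upwards [self_mem_nhdsWithin] with z (hz : z ≠ 0)
    rw [slope_def_field, hFne z hz, hF0, sub_zero, sub_zero, mul_inv, div_eq_mul_inv, mul_comm]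
  -- removable singularity: `F` is continuous at `0`
  have hFd : DifferentiableOn ℂ F (ball 0 δ) := by
    refine (Complex.differentiableOn_compl_singleton_and_continuousAt_iff
      (ball_mem_nhds 0 hδ)).1 ⟨?_, hFderiv.continuousAt⟩
    refine ((hK.mono fun z hz => (hδU hz).1).inv fun z hz => ?_).congr fun z hz => hFne z hz.2
    exact right_ne_zero_of_mul (hδU hz).2
  have hFstrict : HasStrictDerivAt F 1 0 := by
    simpa [hFderiv.deriv] using
      (hFd.analyticOnNhd isOpen_ball 0 (mem_ball_self hδ)).hasStrictDerivAt
  have himage : F '' ball 0 δ ∈ 𝓝 0 := by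
    have h := image_mem_map (m := F) (ball_mem_nhds (0 : ℂ) hδ)
    rwa [hFstrict.map_nhds_eq one_ne_zero, hF0] at h
  obtain ⟨ε, hε, hεF⟩ := Metric.mem_nhds_iff.1 himage
  refine ⟨ε⁻¹, inv_pos.2 hε, fun w hw => ?_⟩
  have hw0 : w ≠ 0 := norm_pos_iff.1 ((inv_pos.2 hε).trans hw)
  obtain ⟨z, hz, hFz⟩ := hεF (show w⁻¹ ∈ ball 0 ε by
    rw [mem_ball_zero_iff, norm_inv]; exact inv_lt_of_inv_lt₀ hε hw)
  have hz0 : z ≠ 0 := by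
    rintro rfl
    exact inv_ne_zero hw0 (hF0 ▸ hFz).symm
  exact ⟨z, (hδU ⟨hz, hz0⟩).1, inv_inj.1 (hFne z hz0 ▸ hFz)⟩

theorem stmt_15_general (m v D : ℝ) (hv : 0 < v) (hD : 0 < D)
    (hmv : 4 / Real.sqrt v < m) (hDv : D / (v * Real.sqrt v) ≤ 1 / 8)
    (A : Set ℂ) (hA : A = ball (0 : ℂ) m \ {0})
    (K : ℂ → ℂ) (hK : DifferentiableOn ℂ K A)
    (hreal : ∀ x : ℝ, 0 < |x| → |x| < m → (K (x : ℂ)).im = 0)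
    (hK1 : ∀ z ∈ A, ‖K z - z⁻¹ - (v : ℂ) * z‖ ≤ D * (‖z‖) ^ 2)
    (hK2 : ∀ z ∈ A, ‖deriv K z + (z ^ 2)⁻¹ - (v : ℂ)‖ ≤ 2 * D * ‖z‖) :
    ∃ R₀ : ℝ, 0 < R₀ ∧ ∃ S : Set ℂ, IsOpen S ∧
      ((fun x : ℝ => (x : ℂ)) '' {x : ℝ | 2 * Real.sqrt v + 5 * D / v < |x|} ⊆ S) ∧
      ({z : ℂ | R₀ < ‖z‖} ⊆ S) ∧
      ∃ G : ℂ → ℂ, DifferentiableOn ℂ G S ∧ ∀ w ∈ S, G w ∈ A ∧ K (G w) = w := by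
  subst hA
  obtain ⟨ρ, hρ, hρm, hsmall, hlarge⟩ := exists_radius hv hD hmv hDv
  replace hsmall : 2 * D * ρ < (ρ ^ 2)⁻¹ - ‖(v : ℂ)‖ := by
    rwa [Complex.norm_real, Real.norm_of_nonneg hv.le]
  have hΩA : ball (0 : ℂ) ρ \ {0} ⊆ ball 0 m \ {0} :=
    sdiff_subset_sdiff_left (ball_subset_ball hρm.le)
  have hK1Ω := fun z hz => hK1 z (hΩA hz)
  have hK2Ω := fun z hz => hK2 z (hΩA hz)
  have hKΩ := hK.mono hΩA
  have hKan := hK.analyticOnNhd (isOpen_ball.sdiff isClosed_singleton)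
  obtain ⟨hopen, hGd⟩ := isOpen_image_and_differentiableOn_invFunOn
    (isOpen_ball.sdiff isClosed_singleton) (fun z hz => (hKan z (hΩA hz)).hasStrictDerivAt)
    (fun z hz => deriv_ne_zero_of_norm_deriv_add_inv_sq_sub_le hD.le hK2Ω hsmall hz)
    (injOn_of_norm_laurentRemainder_le hρ hD.le hKΩ hK1Ω hK2Ω hsmall)
  obtain ⟨R₀, hR₀, hfar⟩ := exists_preimage_of_tendsto_mul_self
    (sdiff_mem_nhdsWithin_compl (ball_mem_nhds 0 hρ) _) hKΩ
    (tendsto_mul_self_nhdsNE_zero (hasDerivAt_laurentRemainder_zero hρ hK1Ω).continuousAt)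
  refine ⟨R₀, hR₀, _, hopen, ?_, fun w hw => hfar w hw, _, hGd,
    fun w hw => ⟨hΩA (invFunOn_mem hw), invFunOn_eq hw⟩⟩
  rintro _ ⟨x, hx, rfl⟩
  exact exists_real_preimage hρ hρm hv.le hD.le hK.continuousOn hreal hK1 (hlarge.trans hx)

/-- Under the stated hypotheses on `K`, there is a holomorphic right inverse `G` of `K`
defined on an open set `S` containing both the real tails `{x : |x| > 2√v + 5D/v}` and a
neighborhood `{z : |z| > R₀}` of infinity, with values in the punctured disc `A`. -/
theorem stmt_15 (m v D : ℝ) (hm : 0 < m) (hv : 0 < v) (hD : 0 < D)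
    (hmv : 4 / Real.sqrt v < m) (hDv : D / (v * Real.sqrt v) ≤ 1 / 8)
    (r : ℝ) (hr : r = 4 * D / v ^ 2)
    (A : Set ℂ) (hA : A = ball (0 : ℂ) m \ {0})
    (K : ℂ → ℂ) (hK : DifferentiableOn ℂ K A)
    (hreal : ∀ x : ℝ, 0 < |x| → |x| < m → (K (x : ℂ)).im = 0)
    (hK1 : ∀ z ∈ A, ‖K z - z⁻¹ - (v : ℂ) * z‖ ≤ D * (‖z‖) ^ 2)
    (hK2 : ∀ z ∈ A, ‖deriv K z + (z ^ 2)⁻¹ - (v : ℂ)‖ ≤ 2 * D * ‖z‖) :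
    ∃ R₀ : ℝ, 0 < R₀ ∧ ∃ S : Set ℂ, IsOpen S ∧
      ((fun x : ℝ => (x : ℂ)) '' {x : ℝ | 2 * Real.sqrt v + 5 * D / v < |x|} ⊆ S) ∧
      ({z : ℂ | R₀ < ‖z‖} ⊆ S) ∧
      ∃ G : ℂ → ℂ, DifferentiableOn ℂ G S ∧ ∀ w ∈ S, G w ∈ A ∧ K (G w) = w :=
  stmt_15_general m v D hv hD hmv hDv A hA K hK hreal hK1 hK2
end
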